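/- Let the spherical distance be d_s(x, a) = 1 - xᵀa for x, a ∈ S^n, and suppose the closed sets U_i, U_j ⊂ S^n satisfy d_s(U_i, U_j) ≥ δ for δ ∈ (0, 2]. If ε < 1 - sqrt((2-δ)/2), then the dilations D_ε(U_i) = {x ∈ S^n : d_s(x, U_i) ≤ ε} and D_ε(U_j) are disjoint. -/
import Mathlib


open scoped RealInnerProductSpace

/-- Spherical distance from a point to a set: `d_s(x, A) = inf_{a ∈ A} (1 - xᵀa)`. -/
noncomputable def sphDistSet {n : ℕ} (x : EuclideanSpace ℝ (Fin (n + 1)))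
    (A : Set (EuclideanSpace ℝ (Fin (n + 1)))) : ℝ :=
  sInf ((fun a => 1 - ⟪x, a⟫) '' A)

lemma sphDist_exists_min {n : ℕ} (x : EuclideanSpace ℝ (Fin (n + 1)))
    (A : Set (EuclideanSpace ℝ (Fin (n + 1))))
    (hA : A ⊆ Metric.sphere (0 : EuclideanSpace ℝ (Fin (n + 1))) 1)
    (hc : IsClosed A) (hne : A.Nonempty) :
    ∃ a ∈ A, 1 - ⟪x, a⟫ ≤ sphDistSet x A := by
  have hcomp : IsCompact A :=
    Metric.isCompact_of_isClosed_isBounded hc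
      ((isCompact_sphere (0 : EuclideanSpace ℝ (Fin (n + 1))) 1).isBounded.subset hA)
  have hcont : Continuous fun a : EuclideanSpace ℝ (Fin (n + 1)) => 1 - ⟪x, a⟫ :=
    continuous_const.sub (Continuous.inner continuous_const continuous_id)
  obtain ⟨a, haA, hmin⟩ := hcomp.exists_isMinOn hne hcont.continuousOn
  refine ⟨a, haA, ?_⟩
  apply le_csInf (hne.image _)
  rintro y ⟨b, hbA, rfl⟩
  exact hmin hbA

lemma inner_ge_of_close {E : Type*} [NormedAddCommGroup E] [InnerProductSpace ℝ E]
    (x a b : E)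
    (hx : ‖x‖ = 1) (ha : ‖a‖ = 1) (hb : ‖b‖ = 1) (c : ℝ) (hc : 0 ≤ c)
    (h1 : c ≤ ⟪x, a⟫) (h2 : c ≤ ⟪x, b⟫) : 2 * c ^ 2 - 1 ≤ ⟪a, b⟫ := by
  set c₁ := ⟪x, a⟫ with hc₁def
  set c₂ := ⟪x, b⟫ with hc₂def
  have hxx : ⟪x, x⟫ = 1 := by
    rw [real_inner_self_eq_norm_sq, hx]; norm_num
  have hc₁le : c₁ ≤ 1 := by
    have := real_inner_le_norm x a; rw [hx, ha] at this; linarith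
  have hc₂le : c₂ ≤ 1 := by
    have := real_inner_le_norm x b; rw [hx, hb] at this; linarith
  set a' := a - c₁ • x with ha'def
  set b' := b - c₂ • x with hb'def
  have hxa' : ⟪x, a'⟫ = 0 := by
    rw [ha'def, inner_sub_right, real_inner_smul_right, hxx]; ring
  have hxb' : ⟪x, b'⟫ = 0 := by
    rw [hb'def, inner_sub_right, real_inner_smul_right, hxx]; ring
  have hna' : ‖a'‖ ^ 2 = 1 - c₁ ^ 2 := by
    have h : ⟪a', a'⟫ = 1 - c₁ ^ 2 := by
      rw [ha'def, inner_sub_left, inner_sub_right, inner_sub_right,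
        real_inner_smul_left, real_inner_smul_left, real_inner_smul_right,
        real_inner_smul_right, hxx, real_inner_comm x a, ← hc₁def,
        real_inner_self_eq_norm_sq, ha]
      ring
    rw [← real_inner_self_eq_norm_sq, h]
  have hnb' : ‖b'‖ ^ 2 = 1 - c₂ ^ 2 := by
    have h : ⟪b', b'⟫ = 1 - c₂ ^ 2 := by
      rw [hb'def, inner_sub_left, inner_sub_right, inner_sub_right,
        real_inner_smul_left, real_inner_smul_left, real_inner_smul_right,
        real_inner_smul_right, hxx, real_inner_comm x b, ← hc₂def,
        real_inner_self_eq_norm_sq, hb]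
      ring
    rw [← real_inner_self_eq_norm_sq, h]
  have hab : ⟪a, b⟫ = ⟪a', b'⟫ + c₁ * c₂ := by
    have hae : a = a' + c₁ • x := by rw [ha'def]; abel
    have hbe : b = b' + c₂ • x := by rw [hb'def]; abel
    rw [hae, hbe, inner_add_left, inner_add_right, inner_add_right,
      real_inner_smul_left, real_inner_smul_left, real_inner_smul_right,
      real_inner_smul_right, hxx, hxb', real_inner_comm x a', hxa']
    ring
  have hlow : -(‖a'‖ * ‖b'‖) ≤ ⟪a', b'⟫ :=
    neg_le_of_abs_le (abs_real_inner_le_norm a' b')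
  set u := ‖a'‖
  set v := ‖b'‖
  have hu : 0 ≤ u := norm_nonneg _
  have hv : 0 ≤ v := norm_nonneg _
  have hA : 0 ≤ c₁ * c₂ - 2 * c ^ 2 + 1 := by nlinarith
  have hsq : (u * v) ^ 2 ≤ (c₁ * c₂ - 2 * c ^ 2 + 1) ^ 2 := by
    nlinarith [mul_nonneg (mul_nonneg (by nlinarith : (0:ℝ) ≤ 1 - c ^ 2)
        (by linarith : (0:ℝ) ≤ c₁ + c₂ - 2 * c)) (by linarith : (0:ℝ) ≤ c₁ + c₂ + 2 * c),
      mul_nonneg (sq_nonneg c) (sq_nonneg (c₁ - c₂))]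
  have huv : u * v ≤ c₁ * c₂ - 2 * c ^ 2 + 1 := by
    nlinarith [mul_nonneg hu hv]
  rw [hab]
  linarith

/-- If closed sets `Uᵢ, Uⱼ ⊂ Sⁿ` satisfy `d_s(Uᵢ, Uⱼ) ≥ δ` for `δ ∈ (0, 2]`, and
`ε < 1 - √((2 - δ)/2)`, then the dilations `D_ε(Uᵢ)` and `D_ε(Uⱼ)` are disjoint. -/
theorem dilations_disjoint (n : ℕ)
    (Ui Uj : Set (EuclideanSpace ℝ (Fin (n + 1))))
    (hUi : Ui ⊆ Metric.sphere (0 : EuclideanSpace ℝ (Fin (n + 1))) 1)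
    (hUj : Uj ⊆ Metric.sphere (0 : EuclideanSpace ℝ (Fin (n + 1))) 1)
    (hUic : IsClosed Ui) (hUjc : IsClosed Uj)
    (hUine : Ui.Nonempty) (hUjne : Uj.Nonempty)
    (δ : ℝ) (hδ : δ ∈ Set.Ioc (0 : ℝ) 2)
    (hsep : ∀ a ∈ Ui, ∀ b ∈ Uj, δ ≤ 1 - ⟪a, b⟫)
    (ε : ℝ) (hε : ε < 1 - Real.sqrt ((2 - δ) / 2)) :
    Disjoint
      {x | x ∈ Metric.sphere (0 : EuclideanSpace ℝ (Fin (n + 1))) 1 ∧ sphDistSet x Ui ≤ ε}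
      {x | x ∈ Metric.sphere (0 : EuclideanSpace ℝ (Fin (n + 1))) 1 ∧ sphDistSet x Uj ≤ ε} := by
  rw [Set.disjoint_left]
  rintro x ⟨hxs, hxi⟩ ⟨-, hxj⟩
  obtain ⟨a, haU, hai⟩ := sphDist_exists_min x Ui hUi hUic hUine
  obtain ⟨b, hbU, hbj⟩ := sphDist_exists_min x Uj hUj hUjc hUjne
  have hxn : ‖x‖ = 1 := by simpa using mem_sphere_zero_iff_norm.mp hxs
  have han : ‖a‖ = 1 := by simpa using mem_sphere_zero_iff_norm.mp (hUi haU)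
  have hbn : ‖b‖ = 1 := by simpa using mem_sphere_zero_iff_norm.mp (hUj hbU)
  have hs : Real.sqrt ((2 - δ) / 2) < 1 - ε := by linarith
  have hs0 : 0 ≤ Real.sqrt ((2 - δ) / 2) := Real.sqrt_nonneg _
  have hc0 : (0:ℝ) ≤ 1 - ε := by linarith
  have h1 : 1 - ε ≤ ⟪x, a⟫ := by linarith
  have h2 : 1 - ε ≤ ⟪x, b⟫ := by linarith
  have hkey := inner_ge_of_close x a b hxn han hbn (1 - ε) hc0 h1 h2
  have hsq : (2 - δ) / 2 < (1 - ε) ^ 2 := by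
    have := Real.sq_sqrt (by linarith [hδ.2] : (0:ℝ) ≤ (2 - δ) / 2)
    nlinarith
  have := hsep a haU b hbU
  nlinarith
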